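/- arXiv:math-ph/0305025 — 5 statements merged into one kernel-verified Lean document; each statement's English description precedes it below -/
import Mathlib

section
/- There exists a constant C > 0 such that for every integer n ≥ 1 and all ℓ > 0, g ≥ 0: E_N^{1D}(n,ℓ,g) ≥ (1/2)·(n(n−1)/ℓ)·g·(1 − C n (ℓg)^{1/2}). -/
open MeasureTheory Real Filter Set
open scoped ENNReal

noncomputable section

/-- The box `[0,ℓ]^n`. -/
def box (n : ℕ) (ℓ : ℝ) : Set (Fin n → ℝ) := Set.pi Set.univ (fun _ => Set.Icc 0 ℓ)

/-- The quadratic form of the Lieb-Liniger Hamiltonian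
`∑_j -∂_j² + g ∑_{i<j} δ(z_i - z_j)` on `[0,ℓ]^n`.  The delta interaction term
`∫ ψ² dσ_{ij}` (integral of `ψ²` over the hyperplane `{z_i = z_j} ∩ [0,ℓ]^n`) is
encoded as `ℓ⁻¹ ∫_{[0,ℓ]^n} ψ(z with z_j replaced by z_i)² dz`, which equals the
hyperplane integral since the integrand does not depend on `z_j`. -/
noncomputable def Q1D (n : ℕ) (ℓ g : ℝ) (ψ : (Fin n → ℝ) → ℝ) : ℝ :=
  (∑ j : Fin n, ∫ z in box n ℓ, (deriv (fun t => ψ (Function.update z j t)) (z j))^2)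
  + g * ∑ i : Fin n, ∑ j ∈ Finset.Ioi i, ℓ⁻¹ * ∫ z in box n ℓ, (ψ (Function.update z j (z i)))^2

/-- Admissible (normalized real C¹) wave functions on `[0,ℓ]^n`. -/
def adm1D (n : ℕ) (ℓ : ℝ) (ψ : (Fin n → ℝ) → ℝ) : Prop :=
  ContDiff ℝ 1 ψ ∧ (∫ z in box n ℓ, (ψ z)^2) = 1

/-- Neumann ground state energy `E_N^{1D}(n,ℓ,g)` of the Lieb-Liniger Hamiltonian. -/
noncomputable def E1DN (n : ℕ) (ℓ g : ℝ) : ℝ :=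
  sInf {E | ∃ ψ, adm1D n ℓ ψ ∧ Q1D n ℓ g ψ = E}

/-- Dirichlet ground state energy `E_D^{1D}(n,ℓ,g)` of the Lieb-Liniger Hamiltonian. -/
noncomputable def E1DD (n : ℕ) (ℓ g : ℝ) : ℝ :=
  sInf {E | ∃ ψ, adm1D n ℓ ψ ∧
    (∀ z ∈ box n ℓ, (∃ j, z j = 0 ∨ z j = ℓ) → ψ z = 0) ∧ Q1D n ℓ g ψ = E}

/-- Periodic ground state energy `E_p^{1D}(n,ℓ,g)` of the Lieb-Liniger Hamiltonian. -/
noncomputable def E1Dp (n : ℕ) (ℓ g : ℝ) : ℝ :=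
  sInf {E | ∃ ψ, adm1D n ℓ ψ ∧
    (∀ z j, ψ (Function.update z j (z j + ℓ)) = ψ z) ∧ Q1D n ℓ g ψ = E}

/-!
Along the `j`-th coordinate line, the fundamental theorem of calculus gives
`ψ(z)² ≤ ψ(z with z_j := z_i)² + ∫₀^ℓ |∂_j(ψ²)| dz_j`; integrating over the box, where the line
integral only costs a factor `ℓ`, bounds the interaction of each pair from below by
`ℓ⁻¹ - ∫ |2 ψ ∂_j ψ|`. With `g |2 ψ ∂_j ψ| ≤ n g² ψ² + n⁻¹ (∂_j ψ)²`, and since each `j` lies in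
fewer than `n` pairs, the kinetic energy absorbs all derivative terms, leaving
`E ≥ ½ n (n-1) g (ℓ⁻¹ - n g)`. This is the claim with `C = 1`, because `ℓ g ≤ (ℓ g)^{1/2}` as soon
as the claimed bound is positive.
-/

namespace LiebLiniger

open Function (update)

def partialDeriv {n : ℕ} (ψ : (Fin n → ℝ) → ℝ) (j : Fin n) (z : Fin n → ℝ) : ℝ :=
  fderiv ℝ ψ z (Pi.single j 1)

variable {n : ℕ} {ℓ : ℝ} {ψ : (Fin n → ℝ) → ℝ}

theorem hasDerivAt_comp_update (hψ : Differentiable ℝ ψ) (z : Fin n → ℝ) (j : Fin n) (t : ℝ) :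
    HasDerivAt (fun s => ψ (update z j s)) (partialDeriv ψ j (update z j t)) t :=
  (hψ _).hasFDerivAt.comp_hasDerivAt t (hasDerivAt_update z j t)

theorem deriv_comp_update_self (hψ : Differentiable ℝ ψ) (z : Fin n → ℝ) (j : Fin n) :
    deriv (fun t => ψ (update z j t)) (z j) = partialDeriv ψ j z := by
  simpa using (hasDerivAt_comp_update hψ z j (z j)).deriv

theorem continuous_partialDeriv (hψ : ContDiff ℝ 1 ψ) (j : Fin n) :
    Continuous (partialDeriv ψ j) :=
  (hψ.continuous_fderiv one_ne_zero).clm_apply continuous_const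

theorem measurableSet_box : MeasurableSet (box n ℓ) :=
  MeasurableSet.univ_pi fun _ => measurableSet_Icc

theorem isCompact_box : IsCompact (box n ℓ) :=
  isCompact_univ_pi fun _ => isCompact_Icc

theorem _root_.Continuous.integrableOn_box {f : (Fin n → ℝ) → ℝ} (hf : Continuous f) :
    IntegrableOn f (box n ℓ) :=
  hf.continuousOn.integrableOn_compact isCompact_box

theorem volume_box : volume (box n ℓ) = ENNReal.ofReal ℓ ^ n := by
  rw [box, volume_pi_pi]
  simp [Real.volume_Icc]

theorem box_succ_eq_preimage (j : Fin (n + 1)) :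
    box (n + 1) ℓ = MeasurableEquiv.piFinSuccAbove (fun _ => ℝ) j ⁻¹' (Icc 0 ℓ ×ˢ box n ℓ) := by
  ext z
  simp only [box, mem_preimage, mem_prod, mem_univ_pi, MeasurableEquiv.piFinSuccAbove_apply,
    Fin.insertNthEquiv_symm_apply, Fin.removeNth]
  refine ⟨fun h => ⟨h j, fun k => h _⟩, fun ⟨h₁, h₂⟩ k => ?_⟩
  rcases eq_or_ne k j with rfl | hk
  · exact h₁
  · obtain ⟨u, rfl⟩ := Fin.exists_succAbove_eq hk
    exact h₂ u

theorem setIntegral_box_succ (hℓ : 0 ≤ ℓ) (j : Fin (n + 1)) {f : (Fin (n + 1) → ℝ) → ℝ}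
    (hf : Continuous f) :
    ∫ z in box (n + 1) ℓ, f z = ∫ y in box n ℓ, ∫ t in 0..ℓ, f (j.insertNth t y) := by
  have hf' : Continuous fun q : (Fin n → ℝ) × ℝ => f (j.insertNth q.2 q.1) :=
    hf.comp (continuous_snd.finInsertNth (A := fun _ => ℝ) j continuous_fst)
  calc ∫ z in box (n + 1) ℓ, f z
      = ∫ p in Icc 0 ℓ ×ˢ box n ℓ, f (j.insertNth p.1 p.2) := by
        rw [box_succ_eq_preimage j, ← (volume_preserving_piFinSuccAbove (fun _ => ℝ) j)
          |>.setIntegral_preimage_emb (MeasurableEquiv.measurableEmbedding _)]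
        simp only [MeasurableEquiv.piFinSuccAbove_apply, Fin.insertNthEquiv_symm_apply,
          Fin.insertNth_self_removeNth]
    _ = ∫ q in box n ℓ ×ˢ Icc 0 ℓ, f (j.insertNth q.2 q.1) := by
        rw [Measure.volume_eq_prod, Measure.volume_eq_prod]
        exact (setIntegral_prod_swap _ _ fun p : ℝ × (Fin n → ℝ) => f (j.insertNth p.1 p.2)).symm
    _ = ∫ y in box n ℓ, ∫ t in 0..ℓ, f (j.insertNth t y) := by
        rw [Measure.volume_eq_prod, setIntegral_prod _
          (hf'.continuousOn.integrableOn_compact (isCompact_box.prod isCompact_Icc))]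
        simp only [intervalIntegral.integral_of_le hℓ, integral_Icc_eq_integral_Ioc]

theorem continuous_intervalIntegral_update (j : Fin n) {h : (Fin n → ℝ) → ℝ}
    (hh : Continuous h) : Continuous fun z => ∫ t in 0..ℓ, h (update z j t) :=
  intervalIntegral.continuous_parametric_intervalIntegral_of_continuous'
    (f := fun z t => h (update z j t))
    (hh.comp (continuous_fst.update j continuous_snd)) 0 ℓ

theorem setIntegral_box_intervalIntegral_update (hℓ : 0 ≤ ℓ) (j : Fin n)
    {h : (Fin n → ℝ) → ℝ} (hh : Continuous h) :
    ∫ z in box n ℓ, ∫ t in 0..ℓ, h (update z j t) = ℓ * ∫ z in box n ℓ, h z := by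
  obtain ⟨m, rfl⟩ := Nat.exists_eq_add_one.2 j.pos
  rw [setIntegral_box_succ hℓ j (continuous_intervalIntegral_update j hh),
    setIntegral_box_succ hℓ j hh, ← integral_const_mul]
  refine integral_congr_ae (ae_of_all _ fun y => ?_)
  simp only [Fin.update_insertNth, intervalIntegral.integral_const, sub_zero, smul_eq_mul]

theorem abs_sub_le_integral_abs_deriv {f f' : ℝ → ℝ} (hf : ∀ t, HasDerivAt f (f' t) t)
    (hf' : Continuous f') {a b s t : ℝ} (hs : s ∈ Icc a b) (ht : t ∈ Icc a b) :
    |f t - f s| ≤ ∫ u in a..b, |f' u| := by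
  wlog hst : s ≤ t generalizing s t
  · rw [abs_sub_comm]; exact this ht hs (le_of_not_ge hst)
  rw [← intervalIntegral.integral_eq_sub_of_hasDerivAt (fun u _ => hf u)
    (hf'.intervalIntegrable _ _)]
  calc |∫ u in s..t, f' u| ≤ ∫ u in s..t, |f' u| :=
        intervalIntegral.abs_integral_le_integral_abs hst
    _ ≤ ∫ u in a..b, |f' u| :=
      intervalIntegral.integral_mono_interval hs.1 hst ht.2
        (Filter.Eventually.of_forall fun u => abs_nonneg _) (hf'.abs.intervalIntegrable _ _)

theorem continuous_two_mul_mul_partialDeriv (hψ : ContDiff ℝ 1 ψ) (j : Fin n) :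
    Continuous fun z => 2 * ψ z * partialDeriv ψ j z :=
  (continuous_const.mul hψ.continuous).mul (continuous_partialDeriv hψ j)

theorem sq_le_sq_update_add_intervalIntegral (hψ : ContDiff ℝ 1 ψ) (i j : Fin n)
    {z : Fin n → ℝ} (hz : z ∈ box n ℓ) :
    ψ z ^ 2 ≤ ψ (update z j (z i)) ^ 2
      + ∫ t in 0..ℓ, |2 * ψ (update z j t) * partialDeriv ψ j (update z j t)| := by
  have hderiv (t : ℝ) : HasDerivAt (fun s => ψ (update z j s) ^ 2)
      (2 * ψ (update z j t) * partialDeriv ψ j (update z j t)) t := by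
    simpa using (hasDerivAt_comp_update (hψ.differentiable one_ne_zero) z j t).fun_pow 2
  have hcont := (continuous_two_mul_mul_partialDeriv hψ j).comp
    (continuous_const.update j continuous_id : Continuous (update z j))
  have h := abs_sub_le_integral_abs_deriv hderiv hcont (hz j trivial) (hz i trivial)
  rw [Function.update_eq_self] at h
  linarith [neg_abs_le (ψ (update z j (z i)) ^ 2 - ψ z ^ 2)]

theorem setIntegral_sq_le_setIntegral_sq_update_add (hψ : ContDiff ℝ 1 ψ) (i j : Fin n)
    (hℓ : 0 ≤ ℓ) :
    ∫ z in box n ℓ, ψ z ^ 2 ≤ (∫ z in box n ℓ, ψ (update z j (z i)) ^ 2)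
      + ℓ * ∫ z in box n ℓ, |2 * ψ z * partialDeriv ψ j z| := by
  have hD := (continuous_two_mul_mul_partialDeriv hψ j).abs
  have hupd : Continuous fun z => ψ (update z j (z i)) ^ 2 :=
    (hψ.continuous.comp (continuous_id.update j (continuous_apply i))).pow 2
  rw [← setIntegral_box_intervalIntegral_update hℓ j hD,
    ← integral_add hupd.integrableOn_box (continuous_intervalIntegral_update j hD).integrableOn_box]
  exact setIntegral_mono_on (hψ.continuous.pow 2).integrableOn_box
    (hupd.add (continuous_intervalIntegral_update j hD)).integrableOn_box measurableSet_box
    fun z hz => sq_le_sq_update_add_intervalIntegral hψ i j hz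

theorem two_mul_abs_mul_le {c : ℝ} (hc : 0 < c) (x y : ℝ) :
    2 * |x * y| ≤ c * x ^ 2 + c⁻¹ * y ^ 2 := by
  rw [abs_mul, ← sq_abs x, ← sq_abs y]
  calc 2 * (|x| * |y|) = c * |x| ^ 2 + c⁻¹ * |y| ^ 2 - c⁻¹ * (c * |x| - |y|) ^ 2 := by
        field_simp; ring
    _ ≤ c * |x| ^ 2 + c⁻¹ * |y| ^ 2 := sub_le_self _ (by positivity)

theorem mul_setIntegral_abs_le (hψ : ContDiff ℝ 1 ψ) (j : Fin n) {g c : ℝ} (hg : 0 ≤ g)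
    (hc : 0 < c) :
    g * ∫ z in box n ℓ, |2 * ψ z * partialDeriv ψ j z|
      ≤ c * g ^ 2 * (∫ z in box n ℓ, ψ z ^ 2) + c⁻¹ * ∫ z in box n ℓ, partialDeriv ψ j z ^ 2 := by
  have hψ2 : IntegrableOn (fun z => ψ z ^ 2) (box n ℓ) := (hψ.continuous.pow 2).integrableOn_box
  have hD2 : IntegrableOn (fun z => partialDeriv ψ j z ^ 2) (box n ℓ) :=
    ((continuous_partialDeriv hψ j).pow 2).integrableOn_box
  rw [← integral_const_mul, ← integral_const_mul, ← integral_const_mul,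
    ← integral_add (hψ2.const_mul _) (hD2.const_mul _)]
  refine setIntegral_mono_on
    ((continuous_two_mul_mul_partialDeriv hψ j).abs.integrableOn_box.const_mul _)
    ((hψ2.const_mul _).add (hD2.const_mul _)) measurableSet_box fun z _ => ?_
  calc g * |2 * ψ z * partialDeriv ψ j z| = 2 * |g * ψ z * partialDeriv ψ j z| := by
        simp only [abs_mul, abs_of_nonneg hg, abs_two]; ring
    _ ≤ c * (g * ψ z) ^ 2 + c⁻¹ * partialDeriv ψ j z ^ 2 := two_mul_abs_mul_le hc _ _
    _ = c * g ^ 2 * ψ z ^ 2 + c⁻¹ * partialDeriv ψ j z ^ 2 := by ring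

theorem interaction_ge (hψ : ContDiff ℝ 1 ψ) (i j : Fin n) (hℓ : 0 < ℓ) {g c : ℝ} (hg : 0 ≤ g)
    (hc : 0 < c) :
    g * (ℓ⁻¹ - c * g) * (∫ z in box n ℓ, ψ z ^ 2) - c⁻¹ * ∫ z in box n ℓ, partialDeriv ψ j z ^ 2
      ≤ g * (ℓ⁻¹ * ∫ z in box n ℓ, ψ (update z j (z i)) ^ 2) := by
  have h := mul_le_mul_of_nonneg_left
    (setIntegral_sq_le_setIntegral_sq_update_add hψ i j hℓ.le) (inv_nonneg.2 hℓ.le)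
  rw [mul_add, ← mul_assoc, inv_mul_cancel₀ hℓ.ne', one_mul] at h
  linarith [mul_le_mul_of_nonneg_left h hg, mul_setIntegral_abs_le hψ j hg hc (ℓ := ℓ)]

open Finset in
theorem sum_card_Ioi_fin (n : ℕ) : ∑ i : Fin n, (#(Ioi i) : ℝ) = n * (n - 1) / 2 := by
  induction n with
  | zero => simp
  | succ n ih =>
    rw [Fin.sum_univ_succ]
    simp only [Fin.card_Ioi, Fin.val_zero, Fin.val_succ, Nat.sub_zero] at ih ⊢
    have (i : Fin n) : n + 1 - 1 - (i + 1 : ℕ) = n - 1 - i := by omega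
    simp only [this, ih]
    push_cast
    ring

variable {g : ℝ}

theorem Q1D_nonneg (hℓ : 0 ≤ ℓ) (hg : 0 ≤ g) (ψ : (Fin n → ℝ) → ℝ) : 0 ≤ Q1D n ℓ g ψ := by
  unfold Q1D
  positivity

open Finset in
theorem Q1D_ge (hℓ : 0 < ℓ) (hg : 0 ≤ g) (hψ : adm1D n ℓ ψ) :
    n * (n - 1) / 2 * (g * (ℓ⁻¹ - n * g)) ≤ Q1D n ℓ g ψ := by
  obtain ⟨hψ, hnorm⟩ := hψ
  set K := g * (ℓ⁻¹ - n * g)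
  set T := fun j => ∫ z in box n ℓ, partialDeriv ψ j z ^ 2
  have hT (j : Fin n) : 0 ≤ T j := setIntegral_nonneg measurableSet_box fun _ _ => sq_nonneg _
  have hkinetic : ∑ j : Fin n, ∫ z in box n ℓ, deriv (fun t => ψ (update z j t)) (z j) ^ 2
      = ∑ j, T j := by
    simp only [deriv_comp_update_self (hψ.differentiable one_ne_zero), T]
  have hpairs : ∑ i : Fin n, ∑ j ∈ Ioi i, (K - (n : ℝ)⁻¹ * T j)
      ≤ g * ∑ i : Fin n, ∑ j ∈ Ioi i, ℓ⁻¹ * ∫ z in box n ℓ, ψ (update z j (z i)) ^ 2 := by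
    rw [mul_sum]
    refine sum_le_sum fun i _ => ?_
    rw [mul_sum]
    refine sum_le_sum fun j _ => ?_
    simpa [hnorm] using interaction_ge hψ i j hℓ hg (Nat.cast_pos.2 j.pos)
  have hcount : ∑ i : Fin n, ∑ j ∈ Ioi i, T j ≤ n * ∑ j, T j :=
    calc ∑ i : Fin n, ∑ j ∈ Ioi i, T j ≤ ∑ _i : Fin n, ∑ j, T j :=
          sum_le_sum fun i _ => sum_le_sum_of_subset_of_nonneg (subset_univ _) fun j _ _ => hT j
      _ = n * ∑ j, T j := by simp
  have hcount' : (n : ℝ)⁻¹ * ∑ i : Fin n, ∑ j ∈ Ioi i, T j ≤ ∑ j, T j := by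
    rcases eq_or_ne n 0 with rfl | hn
    · simp
    · rw [inv_mul_le_iff₀ (by positivity)]
      exact hcount
  have hsum : ∑ i : Fin n, ∑ j ∈ Ioi i, (K - (n : ℝ)⁻¹ * T j)
      = n * (n - 1) / 2 * K - (n : ℝ)⁻¹ * ∑ i : Fin n, ∑ j ∈ Ioi i, T j := by
    simp only [sum_sub_distrib, ← mul_sum, sum_const, nsmul_eq_mul, ← sum_mul, sum_card_Ioi_fin]
  rw [Q1D, hkinetic]
  linarith

theorem adm1D_const (hℓ : 0 < ℓ) : adm1D n ℓ fun _ => (√(ℓ ^ n))⁻¹ := by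
  refine ⟨contDiff_const, ?_⟩
  rw [setIntegral_const, measureReal_def, volume_box, smul_eq_mul, ENNReal.toReal_pow,
    ENNReal.toReal_ofReal hℓ.le, inv_pow, Real.sq_sqrt (by positivity),
    mul_inv_cancel₀ (by positivity)]

theorem le_E1DN (hℓ : 0 < ℓ) {b : ℝ} (hb : ∀ ψ, adm1D n ℓ ψ → b ≤ Q1D n ℓ g ψ) :
    b ≤ E1DN n ℓ g :=
  le_csInf ⟨_, _, adm1D_const hℓ, rfl⟩ fun _ ⟨ψ, hψ, hE⟩ => hE ▸ hb ψ hψ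

theorem self_le_rpow_one_half {x : ℝ} (hx : 0 ≤ x) (h : x ^ ((1 : ℝ) / 2) ≤ 1) :
    x ≤ x ^ ((1 : ℝ) / 2) := by
  rw [← Real.sqrt_eq_rpow] at h ⊢
  calc x = √x * √x := (Real.mul_self_sqrt hx).symm
    _ ≤ 1 * √x := mul_le_mul_of_nonneg_right h (Real.sqrt_nonneg x)
    _ = √x := one_mul _

end LiebLiniger

open LiebLiniger in
/-- Lower bound for the Neumann Lieb-Liniger energy:
`E_N^{1D}(n,ℓ,g) ≥ (1/2)(n(n−1)/ℓ) g (1 − C n (ℓg)^{1/2})`. -/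
theorem stmt13 :
    ∃ C : ℝ, 0 < C ∧ ∀ (n : ℕ), 1 ≤ n → ∀ ℓ g : ℝ, 0 < ℓ → 0 ≤ g →
      (1/2) * ((n : ℝ) * ((n : ℝ) - 1) / ℓ) * g
          * (1 - C * (n : ℝ) * (ℓ * g) ^ ((1:ℝ)/2)) ≤ E1DN n ℓ g := by
  refine ⟨1, one_pos, fun n hn ℓ g hℓ hg => le_E1DN hℓ fun ψ hψ => ?_⟩
  have hn : (1 : ℝ) ≤ n := by exact_mod_cast hn
  have hprefactor : 0 ≤ (1/2) * ((n : ℝ) * ((n : ℝ) - 1) / ℓ) * g := by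
    have : (0 : ℝ) ≤ n - 1 := by linarith
    positivity
  set s := (ℓ * g) ^ ((1 : ℝ) / 2)
  rcases le_or_gt (1 - 1 * n * s) 0 with hneg | hpos
  · exact (mul_nonpos_of_nonneg_of_nonpos hprefactor hneg).trans (Q1D_nonneg hℓ.le hg ψ)
  have hs₀ : 0 ≤ s := Real.rpow_nonneg (by positivity) _
  have hs : ℓ * g ≤ s := self_le_rpow_one_half (by positivity) (by nlinarith)
  calc _ ≤ (1/2) * ((n : ℝ) * ((n : ℝ) - 1) / ℓ) * g * (1 - n * (ℓ * g)) := by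
        gcongr
        nlinarith
    _ = n * (n - 1) / 2 * (g * (ℓ⁻¹ - n * g)) := by field_simp
    _ ≤ Q1D n ℓ g ψ := Q1D_ge hℓ hg hψ
end
end

section
/- Let λ > 1. Let K : [0,∞) → [0,∞) be nonincreasing and L : [0,∞) → [0,∞) be convex with L(0) = 0, whose right derivative L′ satisfies L′(x) ≤ L(λx)/(2λx) for all x > 0. Let E : ℕ∪{0} → [0,∞) be superadditive, i.e., E(n₁ + n₂) ≥ E(n₁) + E(n₂) for all n₁, n₂, and satisfy E(n) ≥ L(n)K(n) for all n. Let (c_n)_{n≥0} be nonnegative real numbers with Σ_{n≥0} c_n ≤ M and Σ_{n≥0} c_n·n = N, where M, N > 0. Then Σ_{n≥0} c_n E(n) ≥ M·L(N/M)·K(⌈λN/M⌉), where ⌈x⌉ denotes the smallest integer ≥ x. -/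
open MeasureTheory Real Set
open scoped ENNReal

/-
Put `ρ = N / M`, `p = ⌈λρ⌉` and let `d` be the right derivative of `L` at `ρ`. By convexity
`L ρ + d (y - ρ) ≤ L y` on `[0, ∞)`, and `y = 0` gives `L ρ ≤ d ρ`. This tangent line, scaled by
`K p`, bounds `E n` from below for every `n`: for `n ≤ p` because `E n ≥ L n K n ≥ L n K p`; for
`n ≥ p` because superadditivity gives `E n ≥ n E p / (2p) ≥ n L p K p / (2p)`, while the hypothesis
on `L′` together with the monotonicity of `L x / x` gives `2 p d ≤ L p`. Summing the affine bound
`K p (d n - (d ρ - L ρ))` against `c n`, with `∑ c n ≤ M` and a nonpositive constant term, yields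
`K p (d N - (d ρ - L ρ) M) = M L ρ K p`.
-/

namespace ConvexOn

variable {S : Set ℝ} {f : ℝ → ℝ} {x y : ℝ}

theorem add_rightDeriv_mul_sub_le (hfc : ConvexOn ℝ S f) (hx : x ∈ interior S) (hy : y ∈ S) :
    f x + derivWithin f (Ioi x) x * (y - x) ≤ f y := by
  rcases lt_trichotomy y x with hyx | rfl | hxy
  · have h := (hfc.slope_le_leftDeriv_of_mem_interior hy hx hyx).trans
      (hfc.leftDeriv_le_rightDeriv_of_mem_interior hx)
    rw [slope_def_field, div_le_iff₀ (sub_pos.2 hyx)] at h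
    linarith
  · simp
  · have h := hfc.rightDeriv_le_slope_of_mem_interior hx hy hxy
    rw [slope_def_field, le_div_iff₀ (sub_pos.2 hxy)] at h
    linarith

theorem monotoneOn_div_of_map_zero (hfc : ConvexOn ℝ S f) (h0 : (0 : ℝ) ∈ S) (hf0 : f 0 = 0) :
    MonotoneOn (fun x ↦ f x / x) {x ∈ S | 0 < x} := by
  simpa only [slope_fun_def_field, hf0, sub_zero] using hfc.monotoneOn_slope_gt h0

end ConvexOn

def Superadditive (u : ℕ → ℝ) : Prop :=
  ∀ m n, u m + u n ≤ u (m + n)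

namespace Superadditive

variable {E : ℕ → ℝ}

theorem mul_add_le (hE : Superadditive E) (q p k : ℕ) : q * E p + E k ≤ E (q * p + k) := by
  induction q with
  | zero => simp
  | succ q ih =>
    have h := hE p (q * p + k)
    rw [show (q + 1) * p + k = p + (q * p + k) by ring]
    push_cast
    linarith

theorem cast_mul_le_two_mul (hE : Superadditive E) (hE0 : ∀ n, 0 ≤ E n) {p n : ℕ}
    (hp : 0 < p) (hpn : p ≤ n) : (n : ℝ) * E p ≤ 2 * p * E n := by
  have hq : 1 ≤ n / p := (Nat.one_le_div_iff hp).2 hpn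
  have hqE : ((n / p : ℕ) : ℝ) * E p ≤ E n := by
    have h := hE.mul_add_le (n / p) p (n % p)
    rw [Nat.div_add_mod'] at h
    linarith [hE0 (n % p)]
  have hn : (n : ℝ) ≤ 2 * (n / p : ℕ) * p := by
    have h : n < (n / p + 1) * p := by
      rw [add_mul, one_mul]
      exact Nat.lt_div_mul_add hp
    have hq' : (1 : ℝ) ≤ (n / p : ℕ) := by exact_mod_cast hq
    have h' : (n : ℝ) < ((n / p : ℕ) + 1) * p := by exact_mod_cast h
    nlinarith
  nlinarith [hE0 p, hE0 n]

theorem mul_tangent_le {K L : ℝ → ℝ} {p : ℕ} {ρ d : ℝ} (hE : Superadditive E)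
    (hE0 : ∀ n, 0 ≤ E n) (hELK : ∀ n : ℕ, L n * K n ≤ E n) (hKanti : AntitoneOn K (Ici 0))
    (hKp : 0 ≤ K p) (hL0 : ∀ n : ℕ, 0 ≤ L n) (hp : 0 < p)
    (htan : ∀ n : ℕ, L ρ + d * (n - ρ) ≤ L n) (hρ : L ρ ≤ d * ρ) (hd : 2 * p * d ≤ L p)
    (n : ℕ) : K p * (L ρ + d * (n - ρ)) ≤ E n := by
  rcases le_total n p with hnp | hpn
  · have hKn : K p ≤ K n := hKanti (mem_Ici.2 n.cast_nonneg) (mem_Ici.2 p.cast_nonneg)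
      (by exact_mod_cast hnp)
    calc K p * (L ρ + d * (n - ρ)) ≤ K p * L n := mul_le_mul_of_nonneg_left (htan n) hKp
      _ ≤ K n * L n := mul_le_mul_of_nonneg_right hKn (hL0 n)
      _ = L n * K n := mul_comm _ _
      _ ≤ E n := hELK n
  · have hp' : (0 : ℝ) < 2 * p := by positivity
    refine le_of_mul_le_mul_left ?_ hp'
    calc 2 * p * (K p * (L ρ + d * (n - ρ))) ≤ n * (K p * (2 * p * d)) := by
          have : L ρ + d * (n - ρ) ≤ d * n := by linarith
          nlinarith [mul_le_mul_of_nonneg_left this hKp]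
      _ ≤ n * (L p * K p) := by rw [mul_comm (L p)]; gcongr
      _ ≤ n * E p := by gcongr; exact hELK p
      _ ≤ 2 * p * E n := hE.cast_mul_le_two_mul hE0 hp hpn

end Superadditive

theorem ofReal_sub_le_tsum_ofReal_mul {c f : ℕ → ℝ} {α β M N : ℝ} (hc0 : ∀ n, 0 ≤ c n)
    (hα : 0 ≤ α) (hβ : 0 ≤ β) (hM : 0 ≤ M) (hf : ∀ n : ℕ, α * n - β ≤ f n)
    (hcM : ∑' n, ENNReal.ofReal (c n) ≤ ENNReal.ofReal M)
    (hcN : ∑' n : ℕ, ENNReal.ofReal (c n * n) = ENNReal.ofReal N) :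
    ENNReal.ofReal (α * N - β * M) ≤ ∑' n, ENNReal.ofReal (c n * f n) := by
  rw [ENNReal.ofReal_sub _ (mul_nonneg hβ hM), tsub_le_iff_right, ENNReal.ofReal_mul hα, ← hcN,
    ← ENNReal.tsum_mul_left, ENNReal.ofReal_mul hβ]
  calc ∑' n, ENNReal.ofReal α * ENNReal.ofReal (c n * n)
      ≤ ∑' n, (ENNReal.ofReal (c n * f n) + ENNReal.ofReal β * ENNReal.ofReal (c n)) := by
        refine ENNReal.tsum_le_tsum fun n ↦ ?_
        rw [← ENNReal.ofReal_mul hα, ← ENNReal.ofReal_mul hβ]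
        refine (ENNReal.ofReal_le_ofReal ?_).trans ENNReal.ofReal_add_le
        nlinarith [mul_le_mul_of_nonneg_left (hf n) (hc0 n)]
    _ = ∑' n, ENNReal.ofReal (c n * f n) + ENNReal.ofReal β * ∑' n, ENNReal.ofReal (c n) := by
        rw [ENNReal.tsum_add, ENNReal.tsum_mul_left]
    _ ≤ ∑' n, ENNReal.ofReal (c n * f n) + ENNReal.ofReal β * ENNReal.ofReal M := by gcongr

theorem two_mul_rightDeriv_le {L : ℝ → ℝ} {lam ρ q : ℝ} (hLconv : ConvexOn ℝ (Ici 0) L)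
    (hL00 : L 0 = 0)
    (hL' : ∀ d : ℝ, HasDerivWithinAt L d (Ici ρ) ρ → d ≤ L (lam * ρ) / (2 * lam * ρ))
    (hρ : 0 < ρ) (hlρ : 0 < lam * ρ) (hlρq : lam * ρ ≤ q) :
    2 * q * derivWithin L (Ioi ρ) ρ ≤ L q := by
  have hq : 0 < q := hlρ.trans_le hlρq
  have hρS : ρ ∈ interior (Ici (0 : ℝ)) := by rwa [interior_Ici]
  have hd := hL' _ (hLconv.hasDerivWithinAt_rightDeriv_of_mem_interior hρS).Ici_of_Ioi
  have hslope := hLconv.monotoneOn_div_of_map_zero self_mem_Ici hL00 ⟨hlρ.le, hlρ⟩ ⟨hq.le, hq⟩ hlρq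
  have h : derivWithin L (Ioi ρ) ρ ≤ L q / q / 2 := calc
    _ ≤ L (lam * ρ) / (2 * lam * ρ) := hd
    _ = L (lam * ρ) / (lam * ρ) / 2 := by ring
    _ ≤ L q / q / 2 := div_le_div_of_nonneg_right hslope two_pos.le
  rw [div_div, le_div_iff₀ (by positivity)] at h
  linarith

/-- The box-counting lemma (Lemma 4 of Lieb–Seiringer–Yngvason): if `E` is a
superadditive sequence bounded below by `L(n)K(n)` with `K` nonincreasing and
`L` convex with `L(0)=0` and right derivative `L′(x) ≤ L(λx)/(2λx)`, and `c_n ≥ 0`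
satisfy `∑ c_n ≤ M`, `∑ c_n n = N`, then `∑ c_n E(n) ≥ M L(N/M) K(⌈λN/M⌉)`.
(Sums are taken in `[0,∞]` so that no summability assumptions are needed.) -/
theorem stmt14 (lam : ℝ) (hlam : 1 < lam)
    (K L : ℝ → ℝ)
    (hK0 : ∀ x, 0 ≤ x → 0 ≤ K x) (hKanti : AntitoneOn K (Set.Ici 0))
    (hL0 : ∀ x, 0 ≤ x → 0 ≤ L x) (hLconv : ConvexOn ℝ (Set.Ici 0) L) (hL00 : L 0 = 0)
    (hL' : ∀ x : ℝ, 0 < x → ∀ d : ℝ, HasDerivWithinAt L d (Set.Ici x) x →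
      d ≤ L (lam * x) / (2 * lam * x))
    (E : ℕ → ℝ) (hE0 : ∀ n, 0 ≤ E n)
    (hEsuper : ∀ n₁ n₂ : ℕ, E n₁ + E n₂ ≤ E (n₁ + n₂))
    (hELK : ∀ n : ℕ, L n * K n ≤ E n)
    (c : ℕ → ℝ) (hc0 : ∀ n, 0 ≤ c n)
    (M N : ℝ) (hM : 0 < M) (hN : 0 < N)
    (hcM : (∑' n : ℕ, ENNReal.ofReal (c n)) ≤ ENNReal.ofReal M)
    (hcN : (∑' n : ℕ, ENNReal.ofReal (c n * n)) = ENNReal.ofReal N) :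
    ENNReal.ofReal (M * L (N / M) * K (Nat.ceil (lam * N / M))) ≤
      ∑' n : ℕ, ENNReal.ofReal (c n * E n) := by
  set ρ := N / M with hρ_def
  set p := Nat.ceil (lam * N / M)
  have hρ : 0 < ρ := div_pos hN hM
  have hlρ : 0 < lam * ρ := mul_pos (by linarith) hρ
  have hlρp : lam * ρ ≤ p := by rw [hρ_def, ← mul_div_assoc]; exact Nat.le_ceil _
  have hp : (0 : ℝ) < p := hlρ.trans_le hlρp
  have hρS : ρ ∈ interior (Ici (0 : ℝ)) := by rwa [interior_Ici]
  set d := derivWithin L (Ioi ρ) ρ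
  have htan (y : ℝ) (hy : 0 ≤ y) : L ρ + d * (y - ρ) ≤ L y :=
    hLconv.add_rightDeriv_mul_sub_le hρS hy
  have hLρ : L ρ ≤ d * ρ := by linarith [htan 0 le_rfl]
  have hd0 : 0 ≤ d := nonneg_of_mul_nonneg_left (hLρ.trans' (hL0 ρ hρ.le)) hρ
  have hd : 2 * p * d ≤ L p :=
    two_mul_rightDeriv_le hLconv hL00 (hL' ρ hρ) hρ hlρ hlρp
  have hKp : 0 ≤ K p := hK0 p p.cast_nonneg
  have haffine (n : ℕ) : K p * d * n - K p * (d * ρ - L ρ) ≤ E n := by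
    have := Superadditive.mul_tangent_le hEsuper hE0 hELK hKanti hKp
      (fun n ↦ hL0 n n.cast_nonneg) (Nat.cast_pos.1 hp) (fun n ↦ htan n n.cast_nonneg) hLρ hd n
    linarith
  have hbound := ofReal_sub_le_tsum_ofReal_mul hc0 (mul_nonneg hKp hd0)
    (mul_nonneg hKp (sub_nonneg.2 hLρ)) hM.le haffine hcM hcN
  convert hbound using 2
  have hN' : N = ρ * M := (div_mul_cancel₀ N hM.ne').symm
  linear_combination -(K p * d) * hN'
end

section
/- Let ℓ > 0, z₀ ∈ (0,ℓ), and let α, A, B > 0 be such that R := B·arctan(BA/(2α)) ≤ min{z₀, ℓ − z₀}. Then for every C¹ function f on [0,ℓ]: α∫₀^ℓ f′(z)² dz + A·f(z₀)² ≥ (α/B²)∫_{z₀−R}^{z₀+R} f(z)² dz. -/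
/-!
For a solution `h` of the Riccati equation `h' = -k - h²`, expanding `0 ≤ (u' - h u)²` gives
`u'² - k u² ≥ (h u²)'`, so integrating bounds `∫ u'² - k ∫ u²` below by boundary terms.
With `k = 1/B²` one such solution is `h z = tan ((p - z)/B)/B`.
On `[z₀, z₀ + R]` take `p = z₀ + R` and on `[z₀ - R, z₀]` take `p = z₀ - R`: then `h` vanishes
at the outer endpoints, and `R = B arctan (BA/2α)` is exactly what makes the two boundary terms
at `z₀` add up to `-A/α · f(z₀)²`.
-/

open MeasureTheory Real Set intervalIntegral

theorem boundary_le_integral_of_riccati {a b k : ℝ} {u u' h : ℝ → ℝ} (hab : a ≤ b)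
    (hu : ∀ x ∈ Icc a b, HasDerivAt u (u' x) x) (hu' : ContinuousOn u' (Icc a b))
    (hh : ∀ x ∈ Icc a b, HasDerivAt h (-k - h x ^ 2) x) :
    h b * u b ^ 2 - h a * u a ^ 2 ≤ (∫ x in a..b, u' x ^ 2) - k * ∫ x in a..b, u x ^ 2 := by
  have hu_cont : ContinuousOn u (Icc a b) := fun x hx =>
    (hu x hx).continuousAt.continuousWithinAt
  have hh_cont : ContinuousOn h (Icc a b) := fun x hx =>
    (hh x hx).continuousAt.continuousWithinAt
  have hderiv : ∀ x ∈ uIcc a b, HasDerivAt (fun x => h x * u x ^ 2)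
      (u' x ^ 2 - k * u x ^ 2 - (u' x - h x * u x) ^ 2) x := by
    intro x hx
    rw [uIcc_of_le hab] at hx
    refine ((hh x hx).mul ((hu x hx).fun_pow 2)).congr_deriv ?_
    push_cast
    ring
  have hint : ∀ g : ℝ → ℝ, ContinuousOn g (Icc a b) → IntervalIntegrable g volume a b :=
    fun g hg => (uIcc_of_le hab ▸ hg).intervalIntegrable
  calc h b * u b ^ 2 - h a * u a ^ 2
      = ∫ x in a..b, u' x ^ 2 - k * u x ^ 2 - (u' x - h x * u x) ^ 2 :=
        (integral_eq_sub_of_hasDerivAt hderiv (hint _ (by fun_prop))).symm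
    _ = (∫ x in a..b, u' x ^ 2) - k * (∫ x in a..b, u x ^ 2)
          - ∫ x in a..b, (u' x - h x * u x) ^ 2 := by
        rw [integral_sub (hint _ (by fun_prop)) (hint _ (by fun_prop)),
          integral_sub (hint _ (by fun_prop)) (hint _ (by fun_prop)),
          intervalIntegral.integral_const_mul]
    _ ≤ (∫ x in a..b, u' x ^ 2) - k * ∫ x in a..b, u x ^ 2 :=
        sub_le_self _ (integral_nonneg hab fun _ _ => sq_nonneg _)

theorem hasDerivAt_tan_sub_div {B p z : ℝ} (hB : B ≠ 0) (hz : cos ((p - z) / B) ≠ 0) :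
    HasDerivAt (fun z => tan ((p - z) / B) / B)
      (-(1 / B ^ 2) - (tan ((p - z) / B) / B) ^ 2) z := by
  have hinner : HasDerivAt (fun z => (p - z) / B) (-1 / B) z := by
    simpa using ((hasDerivAt_id z).const_sub p).div_const B
  refine (((hasDerivAt_tan hz).comp z hinner).div_const B).congr_deriv ?_
  rw [one_div (cos _ ^ 2), ← inv_one_add_tan_sq hz, inv_inv]
  field_simp
  ring

theorem boundary_le_integral_of_tan {B s p a b : ℝ} {f : ℝ → ℝ} (hB : 0 < B)
    (hs : s < π / 2) (hab : a ≤ b) (hp : ∀ z ∈ Icc a b, |p - z| ≤ B * s)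
    (hf : ContDiff ℝ 1 f) :
    tan ((p - b) / B) / B * f b ^ 2 - tan ((p - a) / B) / B * f a ^ 2 ≤
      (∫ z in a..b, deriv f z ^ 2) - 1 / B ^ 2 * ∫ z in a..b, f z ^ 2 := by
  refine boundary_le_integral_of_riccati hab
    (fun x _ => (hf.differentiable one_ne_zero x).hasDerivAt)
    (hf.continuous_deriv le_rfl).continuousOn fun z hz => hasDerivAt_tan_sub_div hB.ne' ?_
  have hle : |(p - z) / B| ≤ s := by
    rw [abs_div, abs_of_pos hB, div_le_iff₀ hB, mul_comm]
    exact hp z hz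
  obtain ⟨hlow, hhigh⟩ := abs_lt.mp (hle.trans_lt hs)
  exact (cos_pos_of_mem_Ioo ⟨hlow, hhigh⟩).ne'

theorem integral_sq_le_of_arctan {B t z₀ : ℝ} {f : ℝ → ℝ} (hB : 0 < B) (ht : 0 ≤ t)
    (hf : ContDiff ℝ 1 f) :
    1 / B ^ 2 * ∫ z in (z₀ - B * arctan t)..(z₀ + B * arctan t), f z ^ 2 ≤
      (∫ z in (z₀ - B * arctan t)..(z₀ + B * arctan t), deriv f z ^ 2)
        + 2 * (t / B) * f z₀ ^ 2 := by
  set R := B * arctan t with hR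
  have hR0 : 0 ≤ R := mul_nonneg hB.le (arctan_nonneg.mpr ht)
  have hRB : R / B = arctan t := by rw [hR, mul_div_cancel_left₀ _ hB.ne']
  have hs := arctan_lt_pi_div_two t
  have right := boundary_le_integral_of_tan (p := z₀ + R) (a := z₀) (b := z₀ + R) hB hs
    (by linarith) (fun z hz => abs_le.mpr ⟨by linarith [hz.2], by linarith [hz.1]⟩) hf
  have left := boundary_le_integral_of_tan (p := z₀ - R) (a := z₀ - R) (b := z₀) hB hs
    (by linarith) (fun z hz => abs_le.mpr ⟨by linarith [hz.2], by linarith [hz.1]⟩) hf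
  have hcont : Continuous f := hf.continuous
  have hcont' : Continuous (deriv f) := hf.continuous_deriv le_rfl
  rw [← integral_add_adjacent_intervals (f := fun z => f z ^ 2) (b := z₀)
      ((hcont.pow 2).intervalIntegrable _ _) ((hcont.pow 2).intervalIntegrable _ _),
    ← integral_add_adjacent_intervals (f := fun z => deriv f z ^ 2) (b := z₀)
      ((hcont'.pow 2).intervalIntegrable _ _) ((hcont'.pow 2).intervalIntegrable _ _)]
  simp only [sub_self, zero_div, tan_zero, add_sub_cancel_left, sub_sub_cancel_left, neg_div,
    hRB, tan_neg, tan_arctan] at right left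
  linarith

theorem stmt16_general (ℓ z₀ α A B R : ℝ)
    (hα : 0 < α) (hA : 0 < A) (hB : 0 < B)
    (hR : R = B * Real.arctan (B * A / (2 * α)))
    (hRle : R ≤ min z₀ (ℓ - z₀))
    (f : ℝ → ℝ) (hf : ContDiff ℝ 1 f) :
    α / B ^ 2 * ∫ z in (z₀ - R)..(z₀ + R), (f z) ^ 2 ≤
      α * (∫ z in (0:ℝ)..ℓ, (deriv f z) ^ 2) + A * (f z₀) ^ 2 := by
  have ht : 0 ≤ B * A / (2 * α) := by positivity
  have hR0 : 0 ≤ R := hR ▸ mul_nonneg hB.le (arctan_nonneg.mpr ht)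
  have hbound := integral_sq_le_of_arctan (z₀ := z₀) hB ht hf
  rw [← hR] at hbound
  have hmono :
      ∫ z in (z₀ - R)..(z₀ + R), deriv f z ^ 2 ≤ ∫ z in (0:ℝ)..ℓ, deriv f z ^ 2 :=
    integral_mono_interval (by linarith [min_le_left z₀ (ℓ - z₀)]) (by linarith)
      (by linarith [min_le_right z₀ (ℓ - z₀)]) (.of_forall fun _ => sq_nonneg _)
      ((hf.continuous_deriv le_rfl).pow 2 |>.intervalIntegrable _ _)
  have hweight : α * (2 * (B * A / (2 * α) / B)) = A := by field_simp
  calc α / B ^ 2 * ∫ z in (z₀ - R)..(z₀ + R), f z ^ 2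
      = α * (1 / B ^ 2 * ∫ z in (z₀ - R)..(z₀ + R), f z ^ 2) := by ring
    _ ≤ α * ((∫ z in (z₀ - R)..(z₀ + R), deriv f z ^ 2)
          + 2 * (B * A / (2 * α) / B) * f z₀ ^ 2) := by gcongr
    _ ≤ α * (∫ z in (0:ℝ)..ℓ, deriv f z ^ 2) + A * f z₀ ^ 2 := by
        rw [mul_add, ← mul_assoc, hweight]
        gcongr

/-- Operator inequality `-α∂_z² + Aδ(z-z₀) - (α/B²)θ(R-|z-z₀|) ≥ 0` on `[0,ℓ]`
(Neumann), stated as an inequality of quadratic forms on C¹ functions. -/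
theorem stmt16 (ℓ z₀ α A B R : ℝ) (hℓ : 0 < ℓ) (hz₀ : z₀ ∈ Set.Ioo 0 ℓ)
    (hα : 0 < α) (hA : 0 < A) (hB : 0 < B)
    (hR : R = B * Real.arctan (B * A / (2 * α)))
    (hRle : R ≤ min z₀ (ℓ - z₀))
    (f : ℝ → ℝ) (hf : ContDiff ℝ 1 f) :
    α / B ^ 2 * ∫ z in (z₀ - R)..(z₀ + R), (f z) ^ 2 ≤
      α * (∫ z in (0:ℝ)..ℓ, (deriv f z) ^ 2) + A * (f z₀) ^ 2 :=
  stmt16_general ℓ z₀ α A B R hα hA hB hR hRle f hf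
end

section
/- For every C¹ function φ : ℝ → ℝ with φ ∈ L²(ℝ) and φ′ ∈ L²(ℝ), and for all z, z′ ∈ ℝ: |φ(z)² − φ(z′)²| ≤ 2|z − z′|^{1/2}·(∫_ℝ φ²)^{1/4}·(∫_ℝ (φ′)²)^{3/4}. -/
open MeasureTheory Real Set
open scoped Interval

/-! Since `(φ²)′ = 2φφ′` is integrable, `φ²` vanishes at `±∞`; integrating `(φ²)′` from either
side gives `φ(x)² ≤ ∫ |φ φ′| ≤ ‖φ‖₂ ‖φ′‖₂` by Cauchy–Schwarz. Hence
`‖φ‖_∞ ≤ ‖φ‖₂^{1/2} ‖φ′‖₂^{1/2}`, and Cauchy–Schwarz on the interval between `z′` and `z` gives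
`|φ(z)² − φ(z′)²| ≤ 2 ‖φ‖_∞ ∫_{z′}^{z} |φ′| ≤ 2 ‖φ‖_∞ |z − z′|^{1/2} ‖φ′‖₂`. -/

section CauchySchwarz

variable {α : Type*} [MeasurableSpace α] {μ : Measure α}

theorem integral_abs_mul_abs_le_of_memLp_two {f g : α → ℝ} (hf : MemLp f 2 μ)
    (hg : MemLp g 2 μ) :
    ∫ x, |f x| * |g x| ∂μ ≤
      (∫ x, f x ^ 2 ∂μ) ^ ((1:ℝ)/2) * (∫ x, g x ^ 2 ∂μ) ^ ((1:ℝ)/2) := by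
  simpa [rpow_two, sq_abs] using integral_mul_le_Lp_mul_Lq_of_nonneg HolderConjugate.two_two
    (ae_of_all _ fun x => abs_nonneg (f x)) (ae_of_all _ fun x => abs_nonneg (g x))
    (by simpa using hf.norm) (by simpa using hg.norm)

theorem setIntegral_abs_le_of_memLp_two {h : α → ℝ} (hh : MemLp h 2 μ) {s : Set α}
    (hs : μ s ≠ ⊤) :
    ∫ x in s, |h x| ∂μ ≤ μ.real s ^ ((1:ℝ)/2) * (∫ x, h x ^ 2 ∂μ) ^ ((1:ℝ)/2) := by
  have : IsFiniteMeasure (μ.restrict s) :=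
    ⟨by rwa [Measure.restrict_apply_univ, lt_top_iff_ne_top]⟩
  have hCS := integral_abs_mul_abs_le_of_memLp_two (hh.restrict s) (memLp_const (1:ℝ))
  simp only [abs_one, mul_one, one_pow, integral_const, smul_eq_mul,
    measureReal_restrict_apply_univ] at hCS
  calc ∫ x in s, |h x| ∂μ
      ≤ (∫ x in s, h x ^ 2 ∂μ) ^ ((1:ℝ)/2) * μ.real s ^ ((1:ℝ)/2) := hCS
    _ ≤ (∫ x, h x ^ 2 ∂μ) ^ ((1:ℝ)/2) * μ.real s ^ ((1:ℝ)/2) := by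
        gcongr ?_ * _
        exact rpow_le_rpow (integral_nonneg fun x => sq_nonneg _)
          (setIntegral_le_integral ((memLp_two_iff_integrable_sq hh.1).mp hh)
            (ae_of_all _ fun x => sq_nonneg _)) (by norm_num)
    _ = μ.real s ^ ((1:ℝ)/2) * (∫ x, h x ^ 2 ∂μ) ^ ((1:ℝ)/2) := mul_comm _ _

end CauchySchwarz

theorem two_mul_abs_le_integral_abs_deriv {g g' : ℝ → ℝ} (hderiv : ∀ t, HasDerivAt g (g' t) t)
    (hg : Integrable g) (hg' : Integrable g') (x : ℝ) :
    2 * |g x| ≤ ∫ t, |g' t| := by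
  have h_left : ∫ t in Iic x, g' t = g x := by
    rw [integral_Iic_of_hasDerivAt_of_tendsto' (fun t _ => hderiv t) hg'.integrableOn
      (tendsto_zero_of_hasDerivAt_of_integrableOn_Iic (a := x) (fun t _ => hderiv t)
        hg'.integrableOn hg.integrableOn), sub_zero]
  have h_right : ∫ t in Ioi x, g' t = -g x := by
    rw [integral_Ioi_of_hasDerivAt_of_tendsto' (fun t _ => hderiv t) hg'.integrableOn
      (tendsto_zero_of_hasDerivAt_of_integrableOn_Ioi (a := x) (fun t _ => hderiv t)
        hg'.integrableOn hg.integrableOn), zero_sub]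
  calc 2 * |g x| = |∫ t in Iic x, g' t| + |∫ t in Ioi x, g' t| := by
        rw [h_left, h_right, abs_neg]; ring
    _ ≤ (∫ t in Iic x, |g' t|) + ∫ t in Ioi x, |g' t| :=
        add_le_add abs_integral_le_integral_abs abs_integral_le_integral_abs
    _ = ∫ t, |g' t| := by
        simpa [compl_Iic] using integral_add_compl (measurableSet_Iic (a := x)) hg'.abs

theorem abs_sub_le_setIntegral_uIoc_abs_deriv {g g' : ℝ → ℝ} {a b : ℝ}
    (hderiv : ∀ t ∈ uIcc a b, HasDerivAt g (g' t) t) (hint : IntervalIntegrable g' volume a b) :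
    |g b - g a| ≤ ∫ t in Ι a b, |g' t| := by
  simpa only [intervalIntegral.integral_eq_sub_of_hasDerivAt hderiv hint, Real.norm_eq_abs]
    using intervalIntegral.norm_integral_le_integral_norm_uIoc (f := g') (a := a) (b := b)
      (μ := volume)

section SquareIntegrable

variable {f : ℝ → ℝ}

theorem memLp_two_deriv_of_integrable_sq (hf' : Integrable fun t => deriv f t ^ 2) :
    MemLp (deriv f) 2 volume :=
  (memLp_two_iff_integrable_sq (measurable_deriv f).aestronglyMeasurable).mpr hf'

theorem hasDerivAt_sq_of_differentiable (hd : Differentiable ℝ f) (t : ℝ) :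
    HasDerivAt (fun t => f t ^ 2) (2 * f t * deriv f t) t := by
  simpa [mul_assoc] using (hd t).hasDerivAt.fun_pow 2

theorem integrable_two_mul_mul_deriv_of_integrable_sq (hd : Differentiable ℝ f)
    (hf : Integrable fun t => f t ^ 2) (hf' : Integrable fun t => deriv f t ^ 2) :
    Integrable fun t => 2 * f t * deriv f t := by
  have := ((memLp_two_iff_integrable_sq hd.continuous.aestronglyMeasurable).mpr hf).integrable_mul
    (memLp_two_deriv_of_integrable_sq hf')
  simpa [mul_assoc] using this.const_mul 2

theorem sq_le_of_integrable_sq_of_integrable_deriv_sq (hd : Differentiable ℝ f)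
    (hf : Integrable fun t => f t ^ 2) (hf' : Integrable fun t => deriv f t ^ 2) (x : ℝ) :
    f x ^ 2 ≤ (∫ t, f t ^ 2) ^ ((1:ℝ)/2) * (∫ t, deriv f t ^ 2) ^ ((1:ℝ)/2) := by
  have h := two_mul_abs_le_integral_abs_deriv (hasDerivAt_sq_of_differentiable hd) hf
    (integrable_two_mul_mul_deriv_of_integrable_sq hd hf hf') x
  simp only [abs_mul, abs_two, abs_sq, mul_assoc, integral_const_mul] at h
  calc f x ^ 2 ≤ ∫ t, |f t| * |deriv f t| := by linarith
    _ ≤ _ := integral_abs_mul_abs_le_of_memLp_two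
        ((memLp_two_iff_integrable_sq hd.continuous.aestronglyMeasurable).mpr hf)
        (memLp_two_deriv_of_integrable_sq hf')

theorem abs_le_of_integrable_sq_of_integrable_deriv_sq (hd : Differentiable ℝ f)
    (hf : Integrable fun t => f t ^ 2) (hf' : Integrable fun t => deriv f t ^ 2) (x : ℝ) :
    |f x| ≤ (∫ t, f t ^ 2) ^ ((1:ℝ)/4) * (∫ t, deriv f t ^ 2) ^ ((1:ℝ)/4) := by
  have hA : 0 ≤ ∫ t, f t ^ 2 := integral_nonneg fun t => sq_nonneg _
  have hB : 0 ≤ ∫ t, deriv f t ^ 2 := integral_nonneg fun t => sq_nonneg _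
  calc |f x| = (f x ^ 2) ^ ((1:ℝ)/2) := by rw [← sqrt_eq_rpow, sqrt_sq_eq_abs]
    _ ≤ ((∫ t, f t ^ 2) ^ ((1:ℝ)/2) * (∫ t, deriv f t ^ 2) ^ ((1:ℝ)/2)) ^ ((1:ℝ)/2) := by
        gcongr; exact sq_le_of_integrable_sq_of_integrable_deriv_sq hd hf hf' x
    _ = _ := by
        rw [mul_rpow (by positivity) (by positivity), ← rpow_mul hA, ← rpow_mul hB]
        norm_num

end SquareIntegrable

/-- For a C¹ function `φ` with `φ, φ′ ∈ L²(ℝ)`: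
`|φ(z)² − φ(z′)²| ≤ 2|z−z′|^{1/2} (∫φ²)^{1/4} (∫(φ′)²)^{3/4}`. -/
theorem stmt17 (φ : ℝ → ℝ) (hφ : ContDiff ℝ 1 φ)
    (hφ2 : Integrable (fun z => (φ z) ^ 2))
    (hφ'2 : Integrable (fun z => (deriv φ z) ^ 2))
    (z z' : ℝ) :
    |(φ z) ^ 2 - (φ z') ^ 2| ≤
      2 * |z - z'| ^ ((1:ℝ)/2) * (∫ t, (φ t) ^ 2) ^ ((1:ℝ)/4)
        * (∫ t, (deriv φ t) ^ 2) ^ ((3:ℝ)/4) := by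
  have hd : Differentiable ℝ φ := hφ.differentiable one_ne_zero
  set A := ∫ t, φ t ^ 2
  set B := ∫ t, deriv φ t ^ 2
  set M := A ^ ((1:ℝ)/4) * B ^ ((1:ℝ)/4)
  have hB : 0 ≤ B := integral_nonneg fun t => sq_nonneg _
  have hM : ∀ t, |φ t| ≤ M := abs_le_of_integrable_sq_of_integrable_deriv_sq hd hφ2 hφ'2
  calc |φ z ^ 2 - φ z' ^ 2| ≤ ∫ t in Ι z' z, |2 * φ t * deriv φ t| :=
        abs_sub_le_setIntegral_uIoc_abs_deriv (fun t _ => hasDerivAt_sq_of_differentiable hd t)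
          (integrable_two_mul_mul_deriv_of_integrable_sq hd hφ2 hφ'2).intervalIntegrable
    _ ≤ ∫ t in Ι z' z, 2 * M * |deriv φ t| := by
        refine integral_mono_of_nonneg (ae_of_all _ fun t => abs_nonneg _)
          (continuous_const.mul (hφ.continuous_deriv le_rfl).abs).integrableOn_uIoc
          (ae_of_all _ fun t => ?_)
        dsimp only
        rw [abs_mul, abs_mul, abs_two, mul_assoc, mul_assoc]
        gcongr
        exact hM t
    _ = 2 * M * ∫ t in Ι z' z, |deriv φ t| := integral_const_mul _ _
    _ ≤ 2 * M * (volume.real (Ι z' z) ^ ((1:ℝ)/2) * B ^ ((1:ℝ)/2)) := by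
        gcongr
        exact setIntegral_abs_le_of_memLp_two
          (memLp_two_deriv_of_integrable_sq hφ'2) (by simp [Real.volume_uIoc])
    _ = 2 * |z - z'| ^ ((1:ℝ)/2) * A ^ ((1:ℝ)/4) * B ^ ((3:ℝ)/4) := by
        rw [show B ^ ((3:ℝ)/4) = B ^ ((1:ℝ)/4) * B ^ ((1:ℝ)/2) by
          rw [← rpow_add' hB (by norm_num)]; norm_num]
        simp only [Measure.real, Real.volume_uIoc, ENNReal.toReal_ofReal (abs_nonneg _), M]
        ring
end

section
/- Fix s > 0. There is a unique μ > 0 such that ∫_ℝ max{μ − |z|^s, 0} dz = 1. With this μ, the function ρ^{TF}(z) = max{μ − |z|^s, 0} minimizes the Thomas–Fermi functional 𝓔^{TF}[ρ] = ∫_ℝ(|z|^s ρ(z) + ρ(z)²/2) dz among all measurable ρ : ℝ → [0,∞) with ∫ρ = 1 and ∫ρ² < ∞, and it is the unique minimizer up to equality almost everywhere. -/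
/-!
Write `b = [μ - V]₊`. Pointwise, `V ρ + ρ²/2 + μ b ≥ V b + b²/2 + (ρ - b)²/2 + μ ρ`.
Integrating, the mass terms `μ ∫ b = μ ∫ ρ` cancel, so `𝓔(ρ) ≥ 𝓔(b) + ½ ∫ (ρ - b)²`: `b` is a
minimizer, and since `𝓔(b) ≤ μ ∫ b < ∞`, equality forces `ρ = b` a.e.
For `V = |z|^s` the substitution `z = μ^{1/s} x` gives
`∫ [μ - |z|^s]₊ = μ^{1 + 1/s} ∫ [1 - |x|^s]₊`, which equals `1` for exactly one `μ > 0`.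
-/

open MeasureTheory Real Set
open scoped ENNReal

namespace ThomasFermi

variable {α : Type*}

def profile (V : α → ℝ) (μ : ℝ) (z : α) : ℝ := max (μ - V z) 0

lemma profile_nonneg (V : α → ℝ) (μ : ℝ) : 0 ≤ profile V μ := fun _ => le_max_right _ _

/-- The difference of the two sides is `(v + b - m) (r - b)` with `b = [m - v]₊`, which vanishes
where `b > 0` and equals `(v - m) r ≥ 0` where `b = 0`. -/
lemma density_add_sq_sub_add_le {v r m : ℝ} (hr : 0 ≤ r) :
    v * max (m - v) 0 + max (m - v) 0 ^ 2 / 2 + (r - max (m - v) 0) ^ 2 / 2 + m * r ≤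
      v * r + r ^ 2 / 2 + m * max (m - v) 0 := by
  rcases le_total m v with h | h
  · rw [max_eq_right (by linarith)]
    nlinarith
  · rw [max_eq_left (by linarith)]
    nlinarith

lemma density_le_mul {v m : ℝ} :
    v * max (m - v) 0 + max (m - v) 0 ^ 2 / 2 ≤ m * max (m - v) 0 := by
  rcases le_total m v with h | h
  · simp [max_eq_right (sub_nonpos.mpr h)]
  · rw [max_eq_left (by linarith)]
    nlinarith

section MeasureSpace

variable [MeasurableSpace α] {ν : Measure α} {V ρ : α → ℝ} {μ : ℝ}

noncomputable def energy (ν : Measure α) (V ρ : α → ℝ) : ℝ≥0∞ :=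
  ∫⁻ z, ENNReal.ofReal (V z * ρ z + ρ z ^ 2 / 2) ∂ν

lemma measurable_profile (hV : Measurable V) (μ : ℝ) : Measurable (profile V μ) :=
  (measurable_const.sub hV).max measurable_const

lemma energy_profile_le_mul (hμ : 0 ≤ μ) :
    energy ν V (profile V μ) ≤ ENNReal.ofReal μ * ∫⁻ z, ENNReal.ofReal (profile V μ z) ∂ν := by
  rw [← lintegral_const_mul' _ _ ENNReal.ofReal_ne_top]
  refine lintegral_mono fun z => ?_
  rw [← ENNReal.ofReal_mul hμ]
  exact ENNReal.ofReal_le_ofReal density_le_mul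

theorem energy_profile_add_lintegral_sq_sub_le (hV : Measurable V) (hV0 : 0 ≤ V) (hμ : 0 ≤ μ)
    (hρ0 : 0 ≤ ρ)
    (hmass : ∫⁻ z, ENNReal.ofReal (ρ z) ∂ν = ∫⁻ z, ENNReal.ofReal (profile V μ z) ∂ν)
    (hfin : ∫⁻ z, ENNReal.ofReal (profile V μ z) ∂ν ≠ ⊤) :
    energy ν V (profile V μ) + ∫⁻ z, ENNReal.ofReal ((ρ z - profile V μ z) ^ 2 / 2) ∂ν ≤
      energy ν V ρ := by
  set b := profile V μ
  set M := ENNReal.ofReal μ * ∫⁻ z, ENNReal.ofReal (b z) ∂ν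
  have hM : M ≠ ⊤ := ENNReal.mul_ne_top ENNReal.ofReal_ne_top hfin
  have hpointwise : ∀ z, ENNReal.ofReal (V z * b z + b z ^ 2 / 2) +
      ENNReal.ofReal ((ρ z - b z) ^ 2 / 2) + ENNReal.ofReal μ * ENNReal.ofReal (ρ z) ≤
      ENNReal.ofReal (V z * ρ z + ρ z ^ 2 / 2) + ENNReal.ofReal μ * ENNReal.ofReal (b z) := by
    intro z
    have hb : 0 ≤ b z := profile_nonneg V μ z
    have hVz : 0 ≤ V z := hV0 z
    have hρz : 0 ≤ ρ z := hρ0 z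
    rw [← ENNReal.ofReal_mul hμ, ← ENNReal.ofReal_mul hμ, ← ENNReal.ofReal_add (by positivity)
      (by positivity), ← ENNReal.ofReal_add (by positivity) (by positivity)]
    exact (ENNReal.ofReal_le_ofReal (density_add_sq_sub_add_le hρz)).trans
      ENNReal.ofReal_add_le
  refine (ENNReal.add_le_add_iff_right hM).mp ?_
  calc _ + M = energy ν V b + ∫⁻ z, ENNReal.ofReal ((ρ z - b z) ^ 2 / 2) ∂ν +
        ENNReal.ofReal μ * ∫⁻ z, ENNReal.ofReal (ρ z) ∂ν := by rw [hmass]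
    _ ≤ ∫⁻ z, (ENNReal.ofReal (V z * b z + b z ^ 2 / 2) + ENNReal.ofReal ((ρ z - b z) ^ 2 / 2) +
        ENNReal.ofReal μ * ENNReal.ofReal (ρ z)) ∂ν := by
      rw [← lintegral_const_mul' _ _ ENNReal.ofReal_ne_top]
      exact (add_le_add (le_lintegral_add _ _) le_rfl).trans (le_lintegral_add _ _)
    _ ≤ ∫⁻ z, (ENNReal.ofReal (V z * ρ z + ρ z ^ 2 / 2) +
        ENNReal.ofReal μ * ENNReal.ofReal (b z)) ∂ν := lintegral_mono hpointwise
    _ = energy ν V ρ + M := by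
      rw [lintegral_add_right _ ((measurable_profile hV μ).ennreal_ofReal.const_mul _),
        lintegral_const_mul' _ _ ENNReal.ofReal_ne_top]
      rfl

theorem energy_profile_le (hV : Measurable V) (hV0 : 0 ≤ V) (hμ : 0 ≤ μ) (hρ0 : 0 ≤ ρ)
    (hmass : ∫⁻ z, ENNReal.ofReal (ρ z) ∂ν = ∫⁻ z, ENNReal.ofReal (profile V μ z) ∂ν)
    (hfin : ∫⁻ z, ENNReal.ofReal (profile V μ z) ∂ν ≠ ⊤) :
    energy ν V (profile V μ) ≤ energy ν V ρ :=
  le_self_add.trans (energy_profile_add_lintegral_sq_sub_le hV hV0 hμ hρ0 hmass hfin)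

theorem ae_eq_profile_of_energy_eq (hV : Measurable V) (hV0 : 0 ≤ V) (hμ : 0 ≤ μ)
    (hρ : Measurable ρ) (hρ0 : 0 ≤ ρ)
    (hmass : ∫⁻ z, ENNReal.ofReal (ρ z) ∂ν = ∫⁻ z, ENNReal.ofReal (profile V μ z) ∂ν)
    (hfin : ∫⁻ z, ENNReal.ofReal (profile V μ z) ∂ν ≠ ⊤)
    (heq : energy ν V ρ = energy ν V (profile V μ)) :
    ρ =ᵐ[ν] profile V μ := by
  have hE : energy ν V (profile V μ) ≠ ⊤ :=
    ne_top_of_le_ne_top (ENNReal.mul_ne_top ENNReal.ofReal_ne_top hfin) (energy_profile_le_mul hμ)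
  have hgap := energy_profile_add_lintegral_sq_sub_le hV hV0 hμ hρ0 hmass hfin
  have hm : Measurable fun z => ENNReal.ofReal ((ρ z - profile V μ z) ^ 2 / 2) :=
    ((hρ.sub (measurable_profile hV μ)).pow_const 2).div_const 2 |>.ennreal_ofReal
  rw [heq, ← add_zero (energy ν V (profile V μ)), add_assoc, zero_add,
    ENNReal.add_le_add_iff_left hE, nonpos_iff_eq_zero, lintegral_eq_zero_iff hm] at hgap
  filter_upwards [hgap] with z hz
  rw [Pi.zero_apply, ENNReal.ofReal_eq_zero] at hz
  have := sq_nonneg (ρ z - profile V μ z)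
  exact sub_eq_zero.mp (pow_eq_zero_iff two_ne_zero |>.mp (by linarith))

end MeasureSpace

section RpowPotential

variable {s μ : ℝ}

lemma continuous_profile_rpow (hs : 0 < s) (μ : ℝ) :
    Continuous (profile (fun z : ℝ => |z| ^ s) μ) :=
  (continuous_const.sub (continuous_abs.rpow_const fun _ => Or.inr hs.le)).max continuous_const

lemma hasCompactSupport_profile_rpow (hs : 0 < s) (hμ : 0 ≤ μ) :
    HasCompactSupport (profile (fun z : ℝ => |z| ^ s) μ) := by
  refine HasCompactSupport.intro (isCompact_closedBall 0 (μ ^ s⁻¹)) fun z hz => ?_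
  rw [Metric.mem_closedBall, dist_zero_right, not_le, Real.norm_eq_abs,
    rpow_inv_lt_iff_of_pos hμ (abs_nonneg z) hs] at hz
  exact max_eq_right (by linarith)

lemma integrable_profile_rpow (hs : 0 < s) (hμ : 0 ≤ μ) :
    Integrable (profile (fun z : ℝ => |z| ^ s) μ) :=
  (continuous_profile_rpow hs μ).integrable_of_hasCompactSupport
    (hasCompactSupport_profile_rpow hs hμ)

lemma integral_profile_rpow_one_pos (hs : 0 < s) :
    0 < ∫ z, profile (fun z : ℝ => |z| ^ s) 1 z :=
  (continuous_profile_rpow hs 1).integral_pos_of_hasCompactSupport_nonneg_nonzero (x := 0)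
    (hasCompactSupport_profile_rpow hs zero_le_one) (profile_nonneg _ _)
    (by simp [profile, zero_rpow hs.ne'])

/-- Substituting `z = μ^{1/s} x` turns `[μ - |z|^s]₊` into `μ [1 - |x|^s]₊`. -/
lemma integral_profile_rpow (hs : 0 < s) (hμ : 0 < μ) :
    ∫ z, profile (fun z : ℝ => |z| ^ s) μ z =
      μ ^ (1 + s⁻¹) * ∫ z, profile (fun z : ℝ => |z| ^ s) 1 z := by
  have ha : 0 < μ ^ s⁻¹ := rpow_pos_of_pos hμ _
  have hscale : ∀ x : ℝ, profile (fun z : ℝ => |z| ^ s) μ (μ ^ s⁻¹ * x) =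
      μ * profile (fun z : ℝ => |z| ^ s) 1 x := by
    intro x
    simp only [profile]
    rw [abs_mul, abs_of_pos ha, mul_rpow ha.le (abs_nonneg x), rpow_inv_rpow hμ.le hs.ne',
      mul_max_of_nonneg _ _ hμ.le, mul_zero, mul_sub, mul_one]
  have h := Measure.integral_comp_mul_left (profile (fun z : ℝ => |z| ^ s) μ) (μ ^ s⁻¹)
  simp only [hscale, integral_const_mul, abs_of_pos (inv_pos.mpr ha), smul_eq_mul] at h
  rw [rpow_add hμ, rpow_one]
  field_simp at h ⊢
  linarith

theorem existsUnique_integral_profile_rpow_eq_one (hs : 0 < s) :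
    ∃! μ : ℝ, 0 < μ ∧ ∫ z, profile (fun z : ℝ => |z| ^ s) μ z = 1 := by
  set c := ∫ z, profile (fun z : ℝ => |z| ^ s) 1 z
  have hc : 0 < c := integral_profile_rpow_one_pos hs
  have ht : 1 + s⁻¹ ≠ 0 := by positivity
  have hnorm : ∀ μ, 0 < μ →
      (∫ z, profile (fun z : ℝ => |z| ^ s) μ z = 1 ↔ μ ^ (1 + s⁻¹) = c⁻¹) := fun μ hμ => by
    rw [integral_profile_rpow hs hμ, mul_eq_one_iff_eq_inv₀ hc.ne']
  refine ⟨c⁻¹ ^ (1 + s⁻¹)⁻¹, ⟨by positivity, (hnorm _ (by positivity)).mpr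
    (rpow_inv_rpow (inv_nonneg.mpr hc.le) ht)⟩, fun μ ⟨hμ, h⟩ => ?_⟩
  rw [← (hnorm μ hμ).mp h, rpow_rpow_inv hμ.le ht]

end RpowPotential

end ThomasFermi

/-- The explicit Thomas–Fermi minimizer: there is a unique `μ > 0` with
`∫ [μ − |z|^s]₊ dz = 1`, and for this `μ` the function `ρ^{TF}(z) = [μ − |z|^s]₊`
minimizes `∫ (|z|^s ρ + ρ²/2)` among all measurable `ρ ≥ 0` with `∫ ρ = 1` and
`∫ ρ² < ∞`, uniquely up to equality a.e. -/
theorem stmt19 (s : ℝ) (hs : 0 < s) :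
    (∃! μ : ℝ, 0 < μ ∧ (∫ z : ℝ, max (μ - |z| ^ s) 0) = 1) ∧
    ∀ μ : ℝ, 0 < μ → (∫ z : ℝ, max (μ - |z| ^ s) 0) = 1 →
      ∀ ρ : ℝ → ℝ, Measurable ρ → (∀ z, 0 ≤ ρ z) →
        (∫⁻ z : ℝ, ENNReal.ofReal (ρ z)) = 1 →
        (∫⁻ z : ℝ, ENNReal.ofReal ((ρ z) ^ 2)) ≠ ⊤ →
        (∫⁻ z : ℝ, ENNReal.ofReal
            (|z| ^ s * max (μ - |z| ^ s) 0 + (max (μ - |z| ^ s) 0) ^ 2 / 2)) ≤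
          (∫⁻ z : ℝ, ENNReal.ofReal (|z| ^ s * ρ z + (ρ z) ^ 2 / 2)) ∧
        ((∫⁻ z : ℝ, ENNReal.ofReal (|z| ^ s * ρ z + (ρ z) ^ 2 / 2)) =
            (∫⁻ z : ℝ, ENNReal.ofReal
              (|z| ^ s * max (μ - |z| ^ s) 0 + (max (μ - |z| ^ s) 0) ^ 2 / 2)) →
          ρ =ᵐ[volume] fun z => max (μ - |z| ^ s) 0) := by
  refine ⟨ThomasFermi.existsUnique_integral_profile_rpow_eq_one hs,
    fun μ hμ hint ρ hρ hρ0 hρ1 _ => ?_⟩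
  have hV : Measurable fun z : ℝ => |z| ^ s :=
    (continuous_abs.rpow_const fun _ => Or.inr hs.le).measurable
  have hV0 : 0 ≤ fun z : ℝ => |z| ^ s := fun z => rpow_nonneg (abs_nonneg z) s
  have hmass : ∫⁻ z, ENNReal.ofReal (ThomasFermi.profile (fun z : ℝ => |z| ^ s) μ z) = 1 := by
    rw [← ofReal_integral_eq_lintegral_ofReal (ThomasFermi.integrable_profile_rpow hs hμ.le)
      (.of_forall (ThomasFermi.profile_nonneg _ μ))]
    exact hint ▸ ENNReal.ofReal_one
  have hfin := hmass ▸ ENNReal.one_ne_top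
  exact ⟨ThomasFermi.energy_profile_le hV hV0 hμ.le hρ0 (hρ1.trans hmass.symm) hfin,
    ThomasFermi.ae_eq_profile_of_energy_eq hV hV0 hμ.le hρ hρ0 (hρ1.trans hmass.symm) hfin⟩
end
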